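/- arXiv:1707.05954 — 4 statements merged into one kernel-verified Lean document; each statement's English description precedes it below -/
import Mathlib

section
/- For natural numbers n, m with 2 < n, 2 < m and n ≠ m, there is no embedding of the structure H_n into H_m (an embedding being an injective map f with R_{H_n}(a,b,c) ↔ R_{H_m}(f(a),f(b),f(c)) for all a,b,c). -/
/-- The ternary relation of the structure `H n` on universe `{0,…,n}`. -/
def Hrel (n a b c : ℕ) : Prop :=
  a ≠ b ∧ b ≠ c ∧ a ≠ c ∧
    ¬ (a = 0 ∧ 0 < b ∧ ((b < n ∧ c = b + 1) ∨ (b = n ∧ c = 1)))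

/-- Cyclic successor on `{1,…,m}`. -/
def nxt (m b : ℕ) : ℕ := if b < m then b + 1 else 1

lemma nxt_iter (m : ℕ) (hm : 1 < m) (x : ℕ) (hx1 : 1 ≤ x) (hxm : x ≤ m) :
    ∀ k, (nxt m)^[k] x = (x - 1 + k) % m + 1 := by
  intro k
  induction k with
  | zero =>
    simp only [Function.iterate_zero, id]
    rw [Nat.mod_eq_of_lt (by omega)]; omega
  | succ k ih =>
    rw [Function.iterate_succ_apply', ih]
    set a := (x - 1 + k) % m with ha
    have haa : a < m := Nat.mod_lt _ (by omega)
    have h2 : (x - 1 + (k + 1)) % m = (a + 1) % m := by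
      conv_lhs => rw [← Nat.add_assoc, Nat.add_mod (x - 1 + k) 1 m]
      rw [Nat.mod_eq_of_lt hm, ← ha]
    rw [h2]
    unfold nxt
    rcases lt_or_ge (a + 1) m with h | h
    · rw [if_pos (by omega), Nat.mod_eq_of_lt h]
    · have : a + 1 = m := by omega
      rw [if_neg (by omega), this, Nat.mod_self]

lemma mod_zero_of (m a n : ℕ) (hm : 0 < m) (ha : a < m) (h : (a + n) % m = a) :
    n % m = 0 := by
  rw [Nat.add_mod, Nat.mod_eq_of_lt ha] at h
  set r := n % m with hr
  have hrm : r < m := Nat.mod_lt _ hm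
  rcases lt_or_ge (a + r) m with h1 | h1
  · rw [Nat.mod_eq_of_lt h1] at h; omega
  · rw [Nat.mod_eq_sub_mod h1, Nat.mod_eq_of_lt (by omega)] at h; omega

theorem no_embedding_Hn_Hm (n m : ℕ) (hn : 2 < n) (hm : 2 < m) (hnm : n ≠ m) :
    ¬ ∃ f : ℕ → ℕ,
      (∀ a, a ≤ n → f a ≤ m) ∧
      Set.InjOn f {a | a ≤ n} ∧
      (∀ a b c, a ≤ n → b ≤ n → c ≤ n →
        (Hrel n a b c ↔ Hrel m (f a) (f b) (f c))) := by
  rintro ⟨f, hbound, hinj, hrel⟩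
  have hmem : ∀ a : ℕ, a ≤ n → a ∈ {a | a ≤ n} := fun a ha => ha
  have hinj' : ∀ a b : ℕ, a ≤ n → b ≤ n → f a = f b → a = b :=
    fun a b ha hb h => hinj (hmem a ha) (hmem b hb) h
  -- n ≤ m by cardinality
  have hle : n ≤ m := by
    have hcard : (Finset.range (n + 1)).card ≤ (Finset.range (m + 1)).card := by
      apply Finset.card_le_card_of_injOn f
      · intro a ha
        simp only [Finset.coe_range, Set.mem_Iio, Finset.mem_coe, Finset.mem_range] at *
        have := hbound a (by omega); omega
      · intro a ha b hb h
        simp only [Finset.coe_range, Set.mem_Iio] at ha hb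
        exact hinj' a b (by omega) (by omega) h
    simpa using hcard
  -- f 0 = 0
  have hf0 : f 0 = 0 := by
    have hnot : ¬ Hrel n 0 1 2 := fun h => h.2.2.2 ⟨rfl, by omega, Or.inl ⟨by omega, rfl⟩⟩
    have hnot' : ¬ Hrel m (f 0) (f 1) (f 2) := by
      rw [← hrel 0 1 2 (by omega) (by omega) (by omega)]; exact hnot
    by_contra h0
    exact hnot' ⟨fun h => (by omega : (0:ℕ) ≠ 1) (hinj' 0 1 (by omega) (by omega) h),
      fun h => (by omega : (1:ℕ) ≠ 2) (hinj' 1 2 (by omega) (by omega) h),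
      fun h => (by omega : (0:ℕ) ≠ 2) (hinj' 0 2 (by omega) (by omega) h),
      fun hD => h0 hD.1⟩
  -- key step: f conjugates cyclic successors
  have step : ∀ b, 1 ≤ b → b ≤ n → f (nxt n b) = nxt m (f b) := by
    intro b hb1 hbn
    set c := nxt n b with hc
    have hcrange : 1 ≤ c ∧ c ≤ n := by unfold nxt at hc; split at hc <;> omega
    have hbc : b ≠ c := by unfold nxt at hc; split at hc <;> omega
    have hforb : (0 = 0 ∧ 0 < b ∧ ((b < n ∧ c = b + 1) ∨ (b = n ∧ c = 1))) := by
      refine ⟨rfl, by omega, ?_⟩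
      unfold nxt at hc
      split at hc
      · exact Or.inl ⟨by omega, hc⟩
      · exact Or.inr ⟨by omega, hc⟩
    have hnot : ¬ Hrel n 0 b c := fun h => h.2.2.2 hforb
    have hnot' : ¬ Hrel m (f 0) (f b) (f c) := by
      rw [← hrel 0 b c (by omega) hbn hcrange.2]; exact hnot
    have hD : f 0 = 0 ∧ 0 < f b ∧
        ((f b < m ∧ f c = f b + 1) ∨ (f b = m ∧ f c = 1)) := by
      by_contra hD
      exact hnot' ⟨fun h => (by omega : (0:ℕ) ≠ b) (hinj' 0 b (by omega) hbn h),
        fun h => hbc (hinj' b c hbn hcrange.2 h),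
        fun h => (by omega : (0:ℕ) ≠ c) (hinj' 0 c (by omega) hcrange.2 h),
        hD⟩
    have hfbm : f b ≤ m := hbound b hbn
    rcases hD.2.2 with ⟨h1, h2⟩ | ⟨h1, h2⟩
    · rw [h2]; unfold nxt; rw [if_pos h1]
    · rw [h2]; unfold nxt; rw [if_neg (by omega)]
  -- f 1 ∈ {1,…,m}
  have hf1m : f 1 ≤ m := hbound 1 (by omega)
  have hf11 : 1 ≤ f 1 := by
    rcases Nat.eq_zero_or_pos (f 1) with h | h
    · exfalso
      have : (1:ℕ) = 0 := hinj' 1 0 (by omega) (by omega) (by rw [h, hf0])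
      omega
    · exact h
  -- iterate
  have key : ∀ k, f ((nxt n)^[k] 1) = (nxt m)^[k] (f 1) := by
    intro k
    induction k with
    | zero => rfl
    | succ k ih =>
      have hrange : 1 ≤ (nxt n)^[k] 1 ∧ (nxt n)^[k] 1 ≤ n := by
        rw [nxt_iter n (by omega) 1 (by omega) (by omega) k]
        have := Nat.mod_lt (1 - 1 + k) (show 0 < n by omega)
        omega
      rw [Function.iterate_succ_apply', Function.iterate_succ_apply',
        step _ hrange.1 hrange.2, ih]
  -- after n steps we return to 1 in H_n
  have hfix : (nxt n)^[n] 1 = 1 := by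
    rw [nxt_iter n (by omega) 1 (by omega) (by omega) n]
    simp
  have hmfix : (nxt m)^[n] (f 1) = f 1 := by
    rw [← key n, hfix]
  rw [nxt_iter m (by omega) (f 1) hf11 hf1m n] at hmfix
  have hmod : n % m = 0 :=
    mod_zero_of m (f 1 - 1) n (by omega) (by omega) (by omega)
  have : m ≤ n := Nat.le_of_dvd (by omega) (Nat.dvd_of_mod_eq_zero hmod)
  omega
end

section
/- For every n > 2, the map g : {0,…,n} → {0,…,n} defined by g(0) = 0, g(k) = k+1 for 0 < k < n, and g(n) = 1, is an automorphism of H_n, i.e., g is a bijection and R(a,b,c) ↔ R(g(a),g(b),g(c)) for all a,b,c. -/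
/-- The rotation map `g` : `g 0 = 0`, `g k = k+1` for `0 < k < n`, `g n = 1`. -/
def rotMap (n : ℕ) : ℕ → ℕ := fun k => if k = 0 then 0 else if k < n then k + 1 else 1

theorem rotMap_is_automorphism (n : ℕ) (hn : 2 < n) :
    Set.BijOn (rotMap n) {k | k ≤ n} {k | k ≤ n} ∧
    (∀ a b c, a ≤ n → b ≤ n → c ≤ n →
      (Hrel n a b c ↔ Hrel n (rotMap n a) (rotMap n b) (rotMap n c))) := by
  constructor
  · refine ⟨?_, ?_, ?_⟩
    · intro x hx
      simp only [Set.mem_setOf_eq] at *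
      unfold rotMap
      split_ifs <;> (try omega) <;> simp <;> omega
    · intro x hx y hy hxy
      simp only [Set.mem_setOf_eq] at *
      unfold rotMap at hxy
      split_ifs at hxy <;> omega
    · intro y hy
      simp only [Set.mem_setOf_eq] at hy
      refine ⟨if y = 0 then 0 else if y = 1 then n else y - 1, ?_, ?_⟩
      · simp only [Set.mem_setOf_eq]
        split_ifs <;> (try omega) <;> simp <;> omega
      · unfold rotMap
        split_ifs <;> (try omega) <;> simp <;> omega
  · intro a b c ha hb hc
    unfold Hrel rotMap
    split_ifs <;> (try omega) <;> simp <;> omega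
end

section
/- For every n > 2, the structure H_n is 3-irreducible: for any three pairwise distinct elements a, b, c of {0,…,n}, there exists a permutation (x,y,z) of (a,b,c) such that R(x,y,z) holds in H_n. -/
theorem Hn_three_irreducible (n : ℕ) (hn : 2 < n) (a b c : ℕ)
    (ha : a ≤ n) (hb : b ≤ n) (hc : c ≤ n)
    (hab : a ≠ b) (hbc : b ≠ c) (hac : a ≠ c) :
    Hrel n a b c ∨ Hrel n a c b ∨ Hrel n b a c ∨
    Hrel n b c a ∨ Hrel n c a b ∨ Hrel n c b a := by
  by_cases h : a = 0
  · right; right; left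
    refine ⟨hab.symm, hac, hbc, fun hh => ?_⟩
    exact hab (h.trans hh.1.symm)
  · left
    exact ⟨hab, hbc, hac, fun hh => h hh.1⟩
end

section
/- Let G be a tournament and n ≥ 3. For tuples (a_1,…,a_n), (b_1,…,b_n) ∈ G^n: (a_1,…,a_n) ≈_n (b_1,…,b_n) if and only if for all pairwise distinct indices i, j, k ∈ {1,…,n}, (a_i,a_j,a_k) ≈_3 (b_i,b_j,b_k). -/
/-- The relation `≈_n` on `n`-tuples over a structure with binary relation `E`. -/
def approxRel {α : Type*} (E : α → α → Prop) {n : ℕ} (a b : Fin n → α) : Prop :=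
  (∀ i j, a i = a j ↔ b i = b j) ∧
    ((∀ i j, E (a i) (a j) ↔ E (b i) (b j)) ∨
     (∀ i j, E (a i) (a j) ↔ E (b j) (b i)))

private lemma approx_master {n : ℕ} (d P Q : Fin n → Fin n → Prop)
    (hd : ∀ i j, d i j → i ≠ j)
    (hco : ∀ i j k, d i j → d k i ∨ d k j)
    (hdeg : ∀ i j, ¬ d i j → P i j)
    (hsym : ∀ i j, d i j → P i j → P j i)
    (hconf : ∀ i j, d i j → P i j → ¬ Q i j)
    (htri : ∀ i j k, i ≠ j → j ≠ k → i ≠ k →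
      (∀ p q, (p = i ∨ p = j ∨ p = k) → (q = i ∨ q = j ∨ q = k) → P p q) ∨
      (∀ p q, (p = i ∨ p = j ∨ p = k) → (q = i ∨ q = j ∨ q = k) → Q p q))
    (p q : Fin n) (hpq : d p q) (hP : P p q) :
    ∀ i j, P i j := by
  have step : ∀ x y z : Fin n, x ≠ y → y ≠ z → x ≠ z → d x y → P x y →
      ∀ u v, (u = x ∨ u = y ∨ u = z) → (v = x ∨ v = y ∨ v = z) → P u v := by
    intro x y z hxy hyz hxz hdxy hPxy
    rcases htri x y z hxy hyz hxz with hS | hQ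
    · exact hS
    · exact absurd (hQ x y (Or.inl rfl) (Or.inr (Or.inl rfl))) (hconf x y hdxy hPxy)
  have claim1 : ∀ k, P p k ∧ P k p ∧ P q k ∧ P k q := by
    intro k
    by_cases hkp : k = p
    · subst hkp
      exact ⟨hdeg _ _ (fun hdd => hd _ _ hdd rfl), hdeg _ _ (fun hdd => hd _ _ hdd rfl),
        hsym _ _ hpq hP, hP⟩
    · by_cases hkq : k = q
      · subst hkq
        exact ⟨hP, hsym _ _ hpq hP, hdeg _ _ (fun hdd => hd _ _ hdd rfl),
          hdeg _ _ (fun hdd => hd _ _ hdd rfl)⟩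
      · have hs := step p q k (hd p q hpq) (Ne.symm hkq) (Ne.symm hkp) hpq hP
        exact ⟨hs p k (Or.inl rfl) (Or.inr (Or.inr rfl)),
          hs k p (Or.inr (Or.inr rfl)) (Or.inl rfl),
          hs q k (Or.inr (Or.inl rfl)) (Or.inr (Or.inr rfl)),
          hs k q (Or.inr (Or.inr rfl)) (Or.inr (Or.inl rfl))⟩
  intro i j
  by_cases hdij : d i j
  · rcases hco p q i hpq with hdi | hdi
    · by_cases hjp : j = p
      · subst hjp; exact (claim1 i).2.1
      · exact step i p j (hd i p hdi) (Ne.symm hjp) (hd i j hdij) hdi (claim1 i).2.1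
          i j (Or.inl rfl) (Or.inr (Or.inr rfl))
    · by_cases hjq : j = q
      · subst hjq; exact (claim1 i).2.2.2
      · exact step i q j (hd i q hdi) (Ne.symm hjq) (hd i j hdij) hdi (claim1 i).2.2.2
          i j (Or.inl rfl) (Or.inr (Or.inr rfl))
  · exact hdeg i j hdij

theorem approxRel_iff_triples {α : Type*} (E : α → α → Prop)
    (htour : (∀ x y : α, x ≠ y → (E x y ↔ ¬ E y x)) ∧ (∀ x : α, ¬ E x x))
    (n : ℕ) (hn : 3 ≤ n) (a b : Fin n → α) :
    approxRel E a b ↔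
      ∀ i j k : Fin n, i ≠ j → j ≠ k → i ≠ k →
        approxRel E ![a i, a j, a k] ![b i, b j, b k] := by
  constructor
  · intro h i j k hij hjk hik
    refine ⟨?_, ?_⟩
    · intro p q
      fin_cases p <;> fin_cases q <;> simpa using h.1 _ _
    · rcases h.2 with h2 | h2
      · left; intro p q; fin_cases p <;> fin_cases q <;> simpa using h2 _ _
      · right; intro p q; fin_cases p <;> fin_cases q <;> simpa using h2 _ _
  · intro h
    -- there is always a third index
    have third : ∀ i j : Fin n, ∃ k : Fin n, k ≠ i ∧ k ≠ j := by
      intro i j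
      by_contra hc
      push_neg at hc
      have hsub : (Finset.univ : Finset (Fin n)) ⊆ {i, j} := by
        intro k _
        by_cases hk : k = i
        · simp [hk]
        · simp [hc k hk]
      have := Finset.card_le_card hsub
      simp at this
      have h2 : ({i, j} : Finset (Fin n)).card ≤ 2 :=
        (Finset.card_insert_le _ _).trans (by simp)
      omega
    have hne : ∀ i j, a i = a j ↔ b i = b j := by
      intro i j
      by_cases hij : i = j
      · subst hij; simp
      · obtain ⟨k, hki, hkj⟩ := third i j
        have := (h i j k hij (Ne.symm hkj) (Ne.symm hki)).1 0 1
        simpa using this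
    have hbne : ∀ i j, a i ≠ a j → b i ≠ b j := fun i j hij h' => hij ((hne i j).2 h')
    -- the triple coherence, phrased for approx_master
    have htri : ∀ i j k : Fin n, i ≠ j → j ≠ k → i ≠ k →
        (∀ p q, (p = i ∨ p = j ∨ p = k) → (q = i ∨ q = j ∨ q = k) →
          (E (a p) (a q) ↔ E (b p) (b q))) ∨
        (∀ p q, (p = i ∨ p = j ∨ p = k) → (q = i ∨ q = j ∨ q = k) →
          (E (a p) (a q) ↔ E (b q) (b p))) := by
      intro i j k hij hjk hik
      rcases (h i j k hij hjk hik).2 with h2 | h2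
      · left
        intro p q hp hq
        rcases hp with rfl | rfl | rfl <;> rcases hq with rfl | rfl | rfl <;>
          first
            | simpa using h2 0 0 | simpa using h2 0 1 | simpa using h2 0 2
            | simpa using h2 1 0 | simpa using h2 1 1 | simpa using h2 1 2
            | simpa using h2 2 0 | simpa using h2 2 1 | simpa using h2 2 2
      · right
        intro p q hp hq
        rcases hp with rfl | rfl | rfl <;> rcases hq with rfl | rfl | rfl <;>
          first
            | simpa using h2 0 0 | simpa using h2 0 1 | simpa using h2 0 2
            | simpa using h2 1 0 | simpa using h2 1 1 | simpa using h2 1 2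
            | simpa using h2 2 0 | simpa using h2 2 1 | simpa using h2 2 2
    refine ⟨hne, ?_⟩
    by_cases hex : ∃ p q, a p ≠ a q
    · obtain ⟨p, q, hpq⟩ := hex
      have hb := hbne p q hpq
      have hbt := htour.1 (b p) (b q) hb
      have hd : ∀ i j : Fin n, a i ≠ a j → i ≠ j := fun i j hij h' => hij (by rw [h'])
      have hco : ∀ i j k : Fin n, a i ≠ a j → a k ≠ a i ∨ a k ≠ a j := by
        intro i j k hij
        by_cases h1 : a k = a i
        · right; rw [h1]; exact hij
        · left; exact h1
      have hdegS : ∀ i j : Fin n, ¬ a i ≠ a j → (E (a i) (a j) ↔ E (b i) (b j)) := by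
        intro i j hij
        rw [not_not] at hij
        have hbij := (hne i j).1 hij
        rw [← hij, ← hbij]
        exact iff_of_false (htour.2 _) (htour.2 _)
      have hdegF : ∀ i j : Fin n, ¬ a i ≠ a j → (E (a i) (a j) ↔ E (b j) (b i)) := by
        intro i j hij
        rw [not_not] at hij
        have hbij := (hne i j).1 hij
        rw [← hij, hbij]
        exact iff_of_false (htour.2 _) (htour.2 _)
      have hsymS : ∀ i j : Fin n, a i ≠ a j → (E (a i) (a j) ↔ E (b i) (b j)) →
          (E (a j) (a i) ↔ E (b j) (b i)) := by
        intro i j hij hS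
        have ha := htour.1 (a i) (a j) hij
        have hb := htour.1 (b i) (b j) (hbne i j hij)
        tauto
      have hsymF : ∀ i j : Fin n, a i ≠ a j → (E (a i) (a j) ↔ E (b j) (b i)) →
          (E (a j) (a i) ↔ E (b i) (b j)) := by
        intro i j hij hF
        have ha := htour.1 (a i) (a j) hij
        have hb := htour.1 (b i) (b j) (hbne i j hij)
        tauto
      have hconfSF : ∀ i j : Fin n, a i ≠ a j → (E (a i) (a j) ↔ E (b i) (b j)) →
          ¬ (E (a i) (a j) ↔ E (b j) (b i)) := by
        intro i j hij hS hF
        have ha := htour.1 (a i) (a j) hij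
        have hb := htour.1 (b i) (b j) (hbne i j hij)
        tauto
      have hconfFS : ∀ i j : Fin n, a i ≠ a j → (E (a i) (a j) ↔ E (b j) (b i)) →
          ¬ (E (a i) (a j) ↔ E (b i) (b j)) := by
        intro i j hij hF hS
        have ha := htour.1 (a i) (a j) hij
        have hb := htour.1 (b i) (b j) (hbne i j hij)
        tauto
      have hSF : (E (a p) (a q) ↔ E (b p) (b q)) ∨ (E (a p) (a q) ↔ E (b q) (b p)) := by
        tauto
      rcases hSF with hS | hF
      · left
        exact approx_master (fun i j => a i ≠ a j) _ _ hd hco hdegS hsymS hconfSF htri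
          p q hpq hS
      · right
        exact approx_master (fun i j => a i ≠ a j) _ _ hd hco hdegF hsymF hconfFS
          (fun i j k h1 h2 h3 => (htri i j k h1 h2 h3).symm) p q hpq hF
    · push_neg at hex
      left
      intro i j
      have hbij := (hne i j).1 (hex i j)
      rw [← hex i j, ← hbij]
      exact iff_of_false (htour.2 _) (htour.2 _)
end
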